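/- arXiv:1112.6147 — 3 statements merged into one kernel-verified Lean document; each statement's English description precedes it below -/
import Mathlib

section
/- Under the hypotheses giving F(t) = 2f(t)/(2 - e^{it}), the cosine transforms satisfy F_c(t) = (2/(5 - 4cos t))·f_c(t), where F_c(t) = ∫₀^∞ cos(xt) dh(x) and f_c(t) = ∫₀¹ cos(xt) dh(x). -/
/-!
Write `ν` for `dh` restricted to `[0, ∞)` and `ν₀` for its restriction to `[0, 1]`. The functional
equations give `h (x + 1) = 1 + h x / 2` for `x ≥ 0`, so `ν = ν₀ + ½ (ν shifted by 1)`; taking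
Fourier transforms, `F = f + ½ e^{it} F`. The symmetry `h x = 1 - h (1 - x)` makes `ν₀` invariant
under `x ↦ 1 - x`, i.e. `f = e^{it} conj f`. Taking real parts of `F = 2 f / (2 - e^{it})` and
using the latter identity gives the claim.
-/

open MeasureTheory Set Filter

namespace StieltjesFunction

variable (f : StieltjesFunction ℝ)

theorem measure_Icc_of_continuous (hf : Continuous f) (a b : ℝ) :
    f.measure (Icc a b) = ENNReal.ofReal (f b - f a) := by
  rw [f.measure_Icc, hf.continuousWithinAt.leftLim_eq]

theorem measure_singleton_of_continuous (hf : Continuous f) (a : ℝ) : f.measure {a} = 0 := by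
  rw [← Icc_self, f.measure_Icc_of_continuous hf, sub_self, ENNReal.ofReal_zero]

theorem restrict_Ioi_add_eq_smul_map {a s c : ℝ} {r : NNReal}
    (hfs : ∀ x, a ≤ x → f (x + s) = c + r * f x) :
    f.measure.restrict (Ioi (a + s)) = r • (f.measure.restrict (Ioi a)).map (· + s) := by
  refine Measure.ext_of_Ioc _ _ fun u v _ => ?_
  rw [Measure.restrict_apply measurableSet_Ioc, Measure.coe_nnreal_smul_apply,
    ← ENNReal.ofReal_coe_nnreal,
    Measure.map_apply (measurable_add_const s) measurableSet_Ioc, preimage_add_const_Ioc,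
    Measure.restrict_apply measurableSet_Ioc, Ioc_inter_Ioi, Ioc_inter_Ioi, f.measure_Ioc,
    f.measure_Ioc, ← ENNReal.ofReal_mul r.coe_nonneg]
  have hmax : (u - s) ⊔ a + s = u ⊔ (a + s) := by rw [← max_add_add_right, sub_add_cancel]
  rcases le_total v (u ⊔ (a + s)) with hv | hv
  · have hv' : v - s ≤ (u - s) ⊔ a := by linarith
    rw [ENNReal.ofReal_of_nonpos (sub_nonpos.2 (f.mono hv)), ENNReal.ofReal_of_nonpos
      (mul_nonpos_of_nonneg_of_nonpos r.coe_nonneg (sub_nonpos.2 (f.mono hv')))]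
  · have hv' := hfs (v - s) (by linarith [le_max_right u (a + s)])
    have hu' := hfs ((u - s) ⊔ a) le_sup_right
    rw [sub_add_cancel] at hv'
    rw [hmax] at hu'
    rw [hv', hu']
    ring_nf

theorem restrict_Ici_eq_add_smul_map (hf : Continuous f) {a s c : ℝ} {r : NNReal} (hs : 0 ≤ s)
    (hfs : ∀ x, a ≤ x → f (x + s) = c + r * f x) :
    f.measure.restrict (Ici a) =
      f.measure.restrict (Icc a (a + s)) + r • (f.measure.restrict (Ici a)).map (· + s) := by
  have hIoi : f.measure.restrict (Ioi a) = f.measure.restrict (Ici a) :=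
    Measure.restrict_congr_set (Ioi_ae_eq_Ici' (f.measure_singleton_of_continuous hf a))
  rw [← hIoi, ← f.restrict_Ioi_add_eq_smul_map hfs, ← Measure.restrict_union
    ((Iic_disjoint_Ioi le_rfl).mono_left Icc_subset_Iic_self) _root_.measurableSet_Ioi,
    Icc_union_Ioi_eq_Ici (le_add_of_nonneg_right hs), hIoi]

theorem restrict_Icc_eq_map_const_sub (hf : Continuous f) {a b C : ℝ}
    (hsym : ∀ x ∈ Icc a b, f x + f (a + b - x) = C) :
    f.measure.restrict (Icc a b) = (f.measure.restrict (Icc a b)).map (fun x => a + b - x) := by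
  refine Measure.ext_of_Icc _ _ fun u v _ => ?_
  rw [Measure.restrict_apply measurableSet_Icc,
    Measure.map_apply (measurable_const_sub _) measurableSet_Icc,
    preimage_const_sub_Icc, Measure.restrict_apply measurableSet_Icc, Icc_inter_Icc,
    Icc_inter_Icc, f.measure_Icc_of_continuous hf, f.measure_Icc_of_continuous hf]
  have hlo : (a + b - v) ⊔ a = a + b - v ⊓ b := by rw [← max_sub_sub_left, add_sub_cancel_right]
  have hhi : (a + b - u) ⊓ b = a + b - u ⊔ a := by rw [← min_sub_sub_left, add_sub_cancel_left]
  rw [hlo, hhi]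
  rcases le_total (v ⊓ b) (u ⊔ a) with huv | huv
  · rw [ENNReal.ofReal_of_nonpos (sub_nonpos.2 (f.mono huv)),
      ENNReal.ofReal_of_nonpos (sub_nonpos.2 (f.mono (by linarith)))]
  · have hv := hsym (v ⊓ b) ⟨le_sup_right.trans huv, inf_le_right⟩
    have hu := hsym (u ⊔ a) ⟨le_sup_right, huv.trans inf_le_right⟩
    congr 1
    linarith

end StieltjesFunction

noncomputable def cosTransform (ν : Measure ℝ) (t : ℝ) : ℝ := ∫ x, Real.cos (x * t) ∂ν

noncomputable def sinTransform (ν : Measure ℝ) (t : ℝ) : ℝ := ∫ x, Real.sin (x * t) ∂ν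

theorem cosTransform_smul_measure (c : NNReal) (ν : Measure ℝ) (t : ℝ) :
    cosTransform (c • ν) t = c * cosTransform ν t :=
  integral_smul_nnreal_measure _ c

theorem sinTransform_smul_measure (c : NNReal) (ν : Measure ℝ) (t : ℝ) :
    sinTransform (c • ν) t = c * sinTransform ν t :=
  integral_smul_nnreal_measure _ c

section FiniteMeasure

variable (ν ν' : Measure ℝ) [IsFiniteMeasure ν] [IsFiniteMeasure ν'] (t : ℝ)

theorem integrable_cos_mul : Integrable (fun x => Real.cos (x * t)) ν :=
  .of_bound (by fun_prop : Continuous fun x : ℝ => Real.cos (x * t)).aestronglyMeasurable 1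
    (ae_of_all _ fun _ => Real.abs_cos_le_one _)

theorem integrable_sin_mul : Integrable (fun x => Real.sin (x * t)) ν :=
  .of_bound (by fun_prop : Continuous fun x : ℝ => Real.sin (x * t)).aestronglyMeasurable 1
    (ae_of_all _ fun _ => Real.abs_sin_le_one _)

theorem cosTransform_add_measure :
    cosTransform (ν + ν') t = cosTransform ν t + cosTransform ν' t :=
  integral_add_measure (integrable_cos_mul ν t) (integrable_cos_mul ν' t)

theorem sinTransform_add_measure :
    sinTransform (ν + ν') t = sinTransform ν t + sinTransform ν' t :=
  integral_add_measure (integrable_sin_mul ν t) (integrable_sin_mul ν' t)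

theorem cosTransform_map_add_const (s : ℝ) :
    cosTransform (ν.map (· + s)) t =
      Real.cos (s * t) * cosTransform ν t - Real.sin (s * t) * sinTransform ν t := by
  rw [cosTransform, integral_map (measurable_add_const s).aemeasurable (by fun_prop)]
  simp_rw [add_mul, Real.cos_add]
  rw [integral_sub ((integrable_cos_mul ν t).mul_const _) ((integrable_sin_mul ν t).mul_const _),
    integral_mul_const, integral_mul_const, cosTransform, sinTransform]
  ring

theorem sinTransform_map_add_const (s : ℝ) :
    sinTransform (ν.map (· + s)) t =
      Real.sin (s * t) * cosTransform ν t + Real.cos (s * t) * sinTransform ν t := by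
  rw [sinTransform, integral_map (measurable_add_const s).aemeasurable (by fun_prop)]
  simp_rw [add_mul, Real.sin_add]
  rw [integral_add ((integrable_sin_mul ν t).mul_const _) ((integrable_cos_mul ν t).mul_const _),
    integral_mul_const, integral_mul_const, cosTransform, sinTransform]
  ring

theorem cosTransform_map_const_sub (c : ℝ) :
    cosTransform (ν.map (fun x => c - x)) t =
      Real.cos (c * t) * cosTransform ν t + Real.sin (c * t) * sinTransform ν t := by
  rw [cosTransform, integral_map (measurable_const_sub c).aemeasurable (by fun_prop)]
  simp_rw [sub_mul, Real.cos_sub]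
  rw [integral_add ((integrable_cos_mul ν t).const_mul _) ((integrable_sin_mul ν t).const_mul _),
    integral_const_mul, integral_const_mul, cosTransform, sinTransform]

end FiniteMeasure

theorem add_one_eq_of_minkowski {h : ℝ → ℝ} (hsym : ∀ x ∈ Icc (0:ℝ) 1, h x = 1 - h (1 - x))
    (heq1 : ∀ x ≥ (0:ℝ), h x = 2 * h (x / (x + 1)))
    (heq2 : ∀ x > (0:ℝ), h x + h (1 / x) = 2) (x : ℝ) (hx : 0 ≤ x) :
    h (x + 1) = 1 + 2⁻¹ * h x := by
  have h0 : h 0 = 0 := by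
    have := heq1 0 le_rfl
    rw [zero_div] at this
    linarith
  have h1 : h 1 = 1 := by
    have := hsym 0 ⟨le_rfl, zero_le_one⟩
    rw [sub_zero, h0] at this
    linarith
  rcases hx.eq_or_lt with rfl | hx
  · rw [zero_add, h0, h1, mul_zero, add_zero]
  · have hinv := heq1 (1 / x) (by positivity)
    rw [show 1 / x / (1 / x + 1) = 1 / (x + 1) by field_simp; ring] at hinv
    linarith [heq2 x hx, heq2 (x + 1) (by linarith)]

theorem stmt4_general (h : StieltjesFunction ℝ) (hcont : Continuous (h : ℝ → ℝ))
    (hmass : h.measure (Set.Ici (0:ℝ)) = 2)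
    (hsym : ∀ x ∈ Set.Icc (0:ℝ) 1, h x = 1 - h (1 - x))
    (heq1 : ∀ x ≥ (0:ℝ), h x = 2 * h (x / (x + 1)))
    (heq2 : ∀ x > (0:ℝ), h x + h (1 / x) = 2)
    (fc Fc : ℝ → ℝ)
    (hfc : ∀ t : ℝ, fc t = ∫ x in Set.Icc (0:ℝ) 1, Real.cos (x * t) ∂h.measure)
    (hFc : ∀ t : ℝ, Fc t = ∫ x in Set.Ici (0:ℝ), Real.cos (x * t) ∂h.measure) :
    ∀ t : ℝ, Fc t = (2 / (5 - 4 * Real.cos t)) * fc t := by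
  set ν := h.measure.restrict (Ici 0)
  set ν₀ := h.measure.restrict (Icc 0 1)
  have : IsFiniteMeasure ν := isFiniteMeasure_restrict.2 (by simp [hmass])
  have : IsFiniteMeasure ν₀ := isFiniteMeasure_restrict.2 measure_Icc_lt_top.ne
  have hν : ν = ν₀ + (2⁻¹ : NNReal) • ν.map (· + 1) := by
    simpa using h.restrict_Ici_eq_add_smul_map hcont zero_le_one (a := 0) (c := 1) (r := 2⁻¹)
      (by simpa using add_one_eq_of_minkowski hsym heq1 heq2)
  have hν₀ : ν₀ = ν₀.map (fun x => 1 - x) := by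
    simpa using h.restrict_Icc_eq_map_const_sub hcont (a := 0) (b := 1) (C := 1)
      fun x hx => by rw [zero_add, hsym x hx]; ring
  intro t
  have hC : cosTransform ν t = cosTransform ν₀ t +
      2⁻¹ * (Real.cos t * cosTransform ν t - Real.sin t * sinTransform ν t) := by
    conv_lhs => rw [hν, cosTransform_add_measure, cosTransform_smul_measure,
      cosTransform_map_add_const]
    norm_num
  have hS : sinTransform ν t = sinTransform ν₀ t +
      2⁻¹ * (Real.sin t * cosTransform ν t + Real.cos t * sinTransform ν t) := by
    conv_lhs => rw [hν, sinTransform_add_measure, sinTransform_smul_measure,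
      sinTransform_map_add_const]
    norm_num
  have hc : cosTransform ν₀ t =
      Real.cos t * cosTransform ν₀ t + Real.sin t * sinTransform ν₀ t := by
    conv_lhs => rw [hν₀, cosTransform_map_const_sub]
    rw [one_mul]
  have hpos : 0 < 5 - 4 * Real.cos t := by linarith [Real.cos_le_one t]
  rw [hFc, hfc, div_mul_eq_mul_div, eq_div_iff hpos.ne']
  change cosTransform ν t * _ = 2 * cosTransform ν₀ t
  linear_combination 2 * (2 - Real.cos t) * hC - 2 * Real.sin t * hS + 2 * hc
    - cosTransform ν t * Real.sin_sq_add_cos_sq t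

/-- Under the Minkowski-type hypotheses on `h`, the cosine Fourier–Stieltjes transforms
satisfy `F_c t = (2/(5 - 4 cos t)) f_c t`. -/
theorem stmt4 (h : StieltjesFunction ℝ) (hcont : Continuous (h : ℝ → ℝ))
    (hmass : h.measure (Set.Ici (0:ℝ)) = 2)
    (hmass1 : h.measure (Set.Icc (0:ℝ) 1) = 1)
    (hsym : ∀ x ∈ Set.Icc (0:ℝ) 1, h x = 1 - h (1 - x))
    (heq1 : ∀ x ≥ (0:ℝ), h x = 2 * h (x / (x + 1)))
    (heq2 : ∀ x > (0:ℝ), h x + h (1 / x) = 2)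
    (fc Fc : ℝ → ℝ)
    (hfc : ∀ t : ℝ, fc t = ∫ x in Set.Icc (0:ℝ) 1, Real.cos (x * t) ∂h.measure)
    (hFc : ∀ t : ℝ, Fc t = ∫ x in Set.Ici (0:ℝ), Real.cos (x * t) ∂h.measure) :
    ∀ t : ℝ, Fc t = (2 / (5 - 4 * Real.cos t)) * fc t :=
  stmt4_general h hcont hmass hsym heq1 heq2 fc Fc hfc hFc
end

section
/- Let h be the Minkowski question mark function extended to [0,∞) via h(x) + h(1/x) = 2. The Fourier–Stieltjes transform f(t) = ∫₀¹ e^{ixt} dh(x) tends to 0 as t → +∞ (i.e., Salem's question has an affirmative answer) if and only if both lim_{t→+∞} t∫₀^∞ h(1/x) sin(xt) dx = 2 and lim_{t→+∞} t∫₀^∞ h(1/x) cos(xt) dx = 0 hold. -/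
/-!
Write `g x = h (1 / x)`. The functional equations give `g (x + 1) = g x / 2` for `x > 0`, so `g`
decays like `2 ^ (-x)`, and `g = 2 - h` on `(0, 1]`. For `Ĝ t = ∫₀^∞ g x e^{ixt} dx`, translating by
`1` gives `∫₀¹ g x e^{ixt} dx = (1 - e^{it} / 2) Ĝ t`, while integrating by parts against `dh` on
`(0, 1]` gives `i t ∫₀¹ g x e^{ixt} dx = f t + e^{it} - 2`. Hence
`(1 - e^{it} / 2) (2 + i t Ĝ t) = f t`. As `1/2 ≤ |1 - e^{it} / 2| ≤ 3/2`, `f t → 0` iff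
`2 + i t Ĝ t → 0`, and the real and imaginary parts of `2 + i t Ĝ t` are `2 - t ∫ g sin` and
`t ∫ g cos`.
-/

open MeasureTheory Set Filter Topology

theorem Complex.tendsto_nhds_iff_re_im {α : Type*} {l : Filter α} {u : α → ℂ} {z : ℂ} :
    Tendsto u l (𝓝 z) ↔
      Tendsto (fun a => (u a).re) l (𝓝 z.re) ∧ Tendsto (fun a => (u a).im) l (𝓝 z.im) := by
  rw [Complex.equivRealProdCLM.toHomeomorph.isInducing.tendsto_nhds_iff, nhds_prod_eq,
    tendsto_prod_iff']
  rfl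

theorem tendsto_zero_iff_of_mul_eq {α 𝕜 : Type*} [NormedDivisionRing 𝕜] {l : Filter α}
    {a u v : α → 𝕜} {m M : ℝ} (hm : 0 < m) (ha : ∀ t, ‖a t‖ ∈ Icc m M)
    (hmul : ∀ t, a t * u t = v t) :
    Tendsto u l (𝓝 0) ↔ Tendsto v l (𝓝 0) := by
  constructor
  · refine (Asymptotics.IsBigO.of_bound (f := v) (g := u) M
      (Eventually.of_forall fun t => ?_)).trans_tendsto
    rw [← hmul, norm_mul]
    gcongr
    exact (ha t).2
  · refine (Asymptotics.IsBigO.of_bound (f := u) (g := v) m⁻¹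
      (Eventually.of_forall fun t => ?_)).trans_tendsto
    rw [← hmul, norm_mul, ← div_eq_inv_mul, le_div_iff₀ hm]
    nlinarith [(ha t).1, norm_nonneg (u t)]

theorem norm_one_sub_div_two_mem_Icc {z : ℂ} (hz : ‖z‖ = 1) :
    ‖1 - z / 2‖ ∈ Icc (1 / 2 : ℝ) (3 / 2) := by
  have hz2 : ‖z / 2‖ = 1 / 2 := by rw [norm_div, hz]; norm_num
  constructor
  · have := norm_sub_norm_le (1 : ℂ) (z / 2)
    rw [hz2, norm_one] at this
    linarith
  · have := norm_sub_le (1 : ℂ) (z / 2)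
    rw [hz2, norm_one] at this
    linarith

theorem le_two_mul_mul_half_rpow_of_add_one {g : ℝ → ℝ} {B : ℝ} (hB : 0 ≤ B)
    (hbound : ∀ x ∈ Ioc (0 : ℝ) 1, g x ≤ B) (hstep : ∀ x > 0, g (x + 1) ≤ g x / 2) :
    ∀ x > 0, g x ≤ 2 * B * (1 / 2 : ℝ) ^ x := by
  suffices ∀ n : ℕ, ∀ x ∈ Ioc (0 : ℝ) n, g x ≤ 2 * B * (1 / 2 : ℝ) ^ x from fun x hx =>
    this ⌈x⌉₊ x ⟨hx, Nat.le_ceil x⟩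
  intro n
  induction n with
  | zero => exact fun x hx => absurd hx.2 (by simpa using hx.1)
  | succ n ih =>
    intro x ⟨hx0, hxn⟩
    rcases le_or_gt x 1 with hx1 | hx1
    · have : (1 / 2 : ℝ) ≤ (1 / 2 : ℝ) ^ x := by
        simpa using Real.rpow_le_rpow_of_exponent_ge (by norm_num) (by norm_num) hx1
      nlinarith [hbound x ⟨hx0, hx1⟩]
    · have hprev := ih (x - 1) ⟨by linarith, by push_cast at hxn; linarith⟩
      have hpow : (1 / 2 : ℝ) ^ (x - 1) = 2 * (1 / 2 : ℝ) ^ x := by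
        rw [Real.rpow_sub (by norm_num), Real.rpow_one]; ring
      have := hstep (x - 1) (by linarith)
      rw [sub_add_cancel] at this
      rw [hpow] at hprev
      linarith

theorem integrableOn_Ioi_of_add_one_le_half {g : ℝ → ℝ} (hg : Measurable g)
    (hpos : ∀ x > 0, 0 ≤ g x) {B : ℝ} (hbound : ∀ x ∈ Ioc (0 : ℝ) 1, g x ≤ B)
    (hstep : ∀ x > 0, g (x + 1) ≤ g x / 2) :
    IntegrableOn g (Ioi 0) := by
  have hB : 0 ≤ B := (hpos 1 one_pos).trans (hbound 1 ⟨one_pos, le_rfl⟩)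
  have hdom : IntegrableOn (fun x : ℝ => 2 * B * (1 / 2 : ℝ) ^ x) (Ioi 0) := by
    have hlog : Real.log (1 / 2) < 0 := Real.log_neg (by norm_num) (by norm_num)
    refine ((integrableOn_exp_mul_Ioi hlog 0).congr_fun (fun x _ => ?_)
      measurableSet_Ioi).const_mul _
    rw [Real.rpow_def_of_pos (by norm_num)]
  refine hdom.mono' hg.aestronglyMeasurable ?_
  filter_upwards [ae_restrict_mem measurableSet_Ioi] with x hx
  rw [Real.norm_of_nonneg (hpos x hx)]
  exact le_two_mul_mul_half_rpow_of_add_one hB hbound hstep x hx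

theorem setIntegral_Ioc_eq_one_sub_mul_setIntegral_Ioi {φ : ℝ → ℂ} {a p : ℝ} (hp : 0 ≤ p) {c : ℂ}
    (hφ : IntegrableOn φ (Ioi a)) (hshift : ∀ x > a, φ (x + p) = c * φ x) :
    ∫ x in Ioc a (a + p), φ x = (1 - c) * ∫ x in Ioi a, φ x := by
  have hsplit := setIntegral_union (Ioc_disjoint_Ioi_same (a := a) (b := a + p)) measurableSet_Ioi
    (hφ.mono_set Ioc_subset_Ioi_self) (hφ.mono_set (Ioi_subset_Ioi (by linarith)))
  rw [Ioc_union_Ioi_eq_Ioi (by linarith)] at hsplit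
  have htail : ∫ x in Ioi (a + p), φ x = c * ∫ x in Ioi a, φ x := by
    rw [← (measurePreserving_add_right volume p).setIntegral_preimage_emb
      (measurableEmbedding_addRight p), preimage_add_const_Ioi, add_sub_cancel_right,
      ← integral_const_mul]
    exact setIntegral_congr_fun measurableSet_Ioi hshift
  rw [htail] at hsplit
  linear_combination -hsplit

theorem StieltjesFunction.nullSingletonClass_of_continuous (f : StieltjesFunction ℝ)
    (hf : Continuous f) : NullSingletonClass f.measure :=
  ⟨fun x => by rw [f.measure_singleton, hf.continuousWithinAt.leftLim_eq, sub_self,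
    ENNReal.ofReal_zero]⟩

theorem StieltjesFunction.setIntegral_Ioc_eq_integral_sub_smul_deriv
    {E : Type*} [NormedAddCommGroup E] [NormedSpace ℝ E] [CompleteSpace E]
    (f : StieltjesFunction ℝ) {φ φ' : ℝ → E} (hφ : ∀ x, HasDerivAt φ (φ' x) x)
    (hφ' : Continuous φ') {a b : ℝ} (hab : a ≤ b) :
    ∫ y in Ioc a b, φ y ∂f.measure = (f b - f a) • φ a + ∫ x in a..b, (f b - f x) • φ' x := by
  have : IsFiniteMeasure (f.measure.restrict (Ioc a b)) := ⟨by simp [f.measure_Ioc]⟩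
  have hreal : ∀ x ≤ b, f.measure.real (Ioc x b) = f b - f x := fun x hx => by
    rw [measureReal_def, f.measure_Ioc, ENNReal.toReal_ofReal (sub_nonneg.2 (f.mono hx))]
  -- Fubini for `K (x, y) = 1_{x < y} φ' x` on `(a, b]²`
  set K : ℝ × ℝ → E := {p | p.1 < p.2}.indicator fun p => φ' p.1
  have hKint : Integrable K ((volume.restrict (Ioc a b)).prod (f.measure.restrict (Ioc a b))) :=
    Integrable.mono' ((hφ'.norm.integrableOn_Icc.mono_set Ioc_subset_Icc_self).comp_fst _)
      ((hφ'.comp continuous_fst).aestronglyMeasurable.indicator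
        (measurableSet_lt measurable_fst measurable_snd))
      (Eventually.of_forall fun p => norm_indicator_le_norm_self _ _)
  have hinner : ∀ y ∈ Ioc a b, ∫ x in Ioc a b, K (x, y) = φ y - φ a := by
    intro y hy
    have hset : Ioc a b ∩ Iio y = Ioo a y := by
      ext x
      simp only [mem_inter_iff, mem_Ioc, mem_Ioo, mem_Iio]
      exact ⟨fun h => ⟨h.1.1, h.2⟩, fun h => ⟨⟨h.1, h.2.le.trans hy.2⟩, h.2⟩⟩
    rw [show (fun x => K (x, y)) = (Iio y).indicator φ' from rfl,
      setIntegral_indicator measurableSet_Iio, hset, setIntegral_congr_set Ioo_ae_eq_Ioc,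
      ← intervalIntegral.integral_of_le hy.1.le,
      intervalIntegral.integral_eq_sub_of_hasDerivAt (fun x _ => hφ x)
        (hφ'.intervalIntegrable _ _)]
  have houter : ∀ x ∈ Ioc a b, ∫ y in Ioc a b, K (x, y) ∂f.measure = (f b - f x) • φ' x := by
    intro x hx
    rw [show (fun y => K (x, y)) = (Ioi x).indicator fun _ => φ' x from rfl,
      setIntegral_indicator _root_.measurableSet_Ioi, Ioc_inter_Ioi, max_eq_right hx.1.le,
      setIntegral_const, hreal x hx.2]
  calc ∫ y in Ioc a b, φ y ∂f.measure
      = ∫ y in Ioc a b, (φ a + ∫ x in Ioc a b, K (x, y)) ∂f.measure := by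
        refine setIntegral_congr_fun measurableSet_Ioc fun y hy => ?_
        rw [hinner y hy, add_sub_cancel]
    _ = (f b - f a) • φ a + ∫ y in Ioc a b, (∫ x in Ioc a b, K (x, y)) ∂f.measure := by
        rw [integral_add (integrable_const _) hKint.integral_prod_right, setIntegral_const,
          hreal a hab]
    _ = (f b - f a) • φ a + ∫ x in Ioc a b, ∫ y in Ioc a b, K (x, y) ∂f.measure := by
        rw [integral_integral_swap (f := fun x y => K (x, y)) hKint]
    _ = (f b - f a) • φ a + ∫ x in a..b, (f b - f x) • φ' x := by
        rw [intervalIntegral.integral_of_le hab,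
          setIntegral_congr_fun measurableSet_Ioc houter]

theorem hasDerivAt_cexp_I_mul_ofReal_mul (t x : ℝ) :
    HasDerivAt (fun x : ℝ => Complex.exp (Complex.I * ((x * t : ℝ) : ℂ)))
      (Complex.I * t * Complex.exp (Complex.I * ((x * t : ℝ) : ℂ))) x := by
  convert ((hasDerivAt_mul_const t).ofReal_comp.const_mul Complex.I).cexp using 1
  ring

theorem integrableOn_ofReal_mul_cexp_I_mul {g : ℝ → ℝ} {s : Set ℝ} (hg : IntegrableOn g s)
    (t : ℝ) :
    IntegrableOn (fun x => (g x : ℂ) * Complex.exp (Complex.I * ((x * t : ℝ) : ℂ))) s :=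
  hg.ofReal.mul_bdd (c := 1) (by fun_prop) (Eventually.of_forall fun x => by
    rw [mul_comm, Complex.norm_exp_ofReal_mul_I])

theorem integral_ofReal_mul_cexp_I_mul {g : ℝ → ℝ} {s : Set ℝ} (hg : IntegrableOn g s) (t : ℝ) :
    ∫ x in s, (g x : ℂ) * Complex.exp (Complex.I * ((x * t : ℝ) : ℂ)) =
      ((∫ x in s, g x * Real.cos (x * t) : ℝ) : ℂ) +
        ((∫ x in s, g x * Real.sin (x * t) : ℝ) : ℂ) * Complex.I := by
  have hint := integrableOn_ofReal_mul_cexp_I_mul hg t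
  have hpt : (fun x : ℝ => (g x : ℂ) * Complex.exp (Complex.I * ((x * t : ℝ) : ℂ))) =
      fun x =>
        ((g x * Real.cos (x * t) : ℝ) : ℂ) + ((g x * Real.sin (x * t) : ℝ) : ℂ) * Complex.I := by
    ext x
    rw [mul_comm Complex.I, Complex.exp_mul_I, ← Complex.ofReal_cos, ← Complex.ofReal_sin]
    push_cast
    ring
  rw [hpt] at hint ⊢
  have hre := integral_re hint
  have him := integral_im hint
  apply Complex.ext <;>
    simp only [RCLike.re_to_complex, RCLike.im_to_complex, Complex.add_re, Complex.add_im,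
      Complex.ofReal_re, Complex.ofReal_im, Complex.re_ofReal_mul, Complex.im_ofReal_mul,
      Complex.I_re, Complex.I_im, mul_zero, mul_one, add_zero, zero_add] at hre him ⊢
  exacts [hre.symm, him.symm]

theorem minkowski_inv_add_one (h : StieltjesFunction ℝ)
    (heq1 : ∀ x ≥ (0:ℝ), h x = 2 * h (x / (x + 1))) {x : ℝ} (hx : 0 < x) :
    h (1 / (x + 1)) = h (1 / x) / 2 := by
  have := heq1 (1 / x) (by positivity)
  rw [show 1 / x / (1 / x + 1) = 1 / (x + 1) by field_simp; ring] at this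
  linarith

theorem integrableOn_minkowski_inv (h : StieltjesFunction ℝ) (h0 : h 0 = 0)
    (heq1 : ∀ x ≥ (0:ℝ), h x = 2 * h (x / (x + 1)))
    (heq2 : ∀ x > (0:ℝ), h x + h (1 / x) = 2) :
    IntegrableOn (fun x => h (1 / x)) (Ioi 0) := by
  refine integrableOn_Ioi_of_add_one_le_half (B := 2)
    (h.mono.measurable.comp (measurable_const.div measurable_id))
    (fun x hx => h0 ▸ h.mono (by positivity)) (fun x hx => ?_)
    (fun x hx => (minkowski_inv_add_one h heq1 hx).le)
  have hinv := heq2 x hx.1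
  have hpos : h 0 ≤ h x := h.mono hx.1.le
  linarith

theorem minkowski_integral_Ioc_mul_cexp (h : StieltjesFunction ℝ) (hcont : Continuous (h : ℝ → ℝ))
    (h0 : h 0 = 0) (h1 : h 1 = 1) (heq2 : ∀ x > (0:ℝ), h x + h (1 / x) = 2) (t : ℝ) :
    Complex.I * t * ∫ x in Ioc 0 1, (h (1 / x) : ℂ) * Complex.exp (Complex.I * ((x * t : ℝ) : ℂ)) =
      (∫ x in Icc 0 1, Complex.exp (Complex.I * ((x * t : ℝ) : ℂ)) ∂h.measure) +
        Complex.exp (Complex.I * t) - 2 := by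
  set φ : ℝ → ℂ := fun x => Complex.exp (Complex.I * ((x * t : ℝ) : ℂ)) with hφ
  set φ' : ℝ → ℂ := fun x => Complex.I * t * φ x with hφ'
  have hderiv : ∀ x, HasDerivAt φ (φ' x) x := hasDerivAt_cexp_I_mul_ofReal_mul t
  have hφ'c : Continuous φ' := by fun_prop
  have := h.nullSingletonClass_of_continuous hcont
  have hparts := h.setIntegral_Ioc_eq_integral_sub_smul_deriv hderiv hφ'c zero_le_one
  have hftc : ∫ x in Ioc 0 1, φ' x = φ 1 - φ 0 := by
    rw [← intervalIntegral.integral_of_le zero_le_one,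
      intervalIntegral.integral_eq_sub_of_hasDerivAt (fun x _ => hderiv x)
        (hφ'c.intervalIntegrable _ _)]
  have hint : IntegrableOn (fun x => (1 - h x) • φ' x) (Ioc 0 1) :=
    ((intervalIntegrable_const.sub (h.mono.intervalIntegrable)).smul_continuousOn
      hφ'c.continuousOn).1
  have hpt : ∀ x ∈ Ioc (0:ℝ) 1,
      Complex.I * t * ((h (1 / x) : ℂ) * φ x) = (1 - h x) • φ' x + φ' x := by
    intro x hx
    have := heq2 x hx.1
    rw [show h (1 / x) = (1 - h x) + 1 by linarith, Complex.real_smul, hφ']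
    push_cast
    ring
  rw [setIntegral_congr_set Ioc_ae_eq_Icc.symm, hparts, h0, h1,
    intervalIntegral.integral_of_le zero_le_one, ← integral_const_mul,
    setIntegral_congr_fun measurableSet_Ioc hpt, integral_add hint hφ'c.integrableOn_Ioc, hftc]
  simp only [hφ, one_smul, sub_zero, zero_mul, one_mul, Complex.ofReal_zero, mul_zero,
    Complex.exp_zero]
  ring

theorem minkowski_fourier_eq_mul (h : StieltjesFunction ℝ) (hcont : Continuous (h : ℝ → ℝ))
    (h0 : h 0 = 0) (h1 : h 1 = 1) (heq1 : ∀ x ≥ (0:ℝ), h x = 2 * h (x / (x + 1)))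
    (heq2 : ∀ x > (0:ℝ), h x + h (1 / x) = 2) (t : ℝ) :
    (1 - Complex.exp (Complex.I * t) / 2) *
        (2 + Complex.I * t *
          ∫ x in Ioi 0, (h (1 / x) : ℂ) * Complex.exp (Complex.I * ((x * t : ℝ) : ℂ))) =
      ∫ x in Icc 0 1, Complex.exp (Complex.I * ((x * t : ℝ) : ℂ)) ∂h.measure := by
  have hint := integrableOn_ofReal_mul_cexp_I_mul (integrableOn_minkowski_inv h h0 heq1 heq2) t
  have hshift := setIntegral_Ioc_eq_one_sub_mul_setIntegral_Ioi zero_le_one hint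
    (c := Complex.exp (Complex.I * t) / 2) fun x hx => by
      rw [minkowski_inv_add_one h heq1 hx]
      push_cast
      rw [show Complex.I * ((x + 1) * t) = Complex.I * t + Complex.I * (x * t) by ring,
        Complex.exp_add]
      ring
  rw [zero_add] at hshift
  linear_combination minkowski_integral_Ioc_mul_cexp h hcont h0 h1 heq2 t -
    Complex.I * t * hshift

theorem stmt17_general (h : StieltjesFunction ℝ) (hcont : Continuous (h : ℝ → ℝ))
    (h0 : h 0 = 0) (h1 : h 1 = 1)
    (heq1 : ∀ x ≥ (0:ℝ), h x = 2 * h (x / (x + 1)))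
    (heq2 : ∀ x > (0:ℝ), h x + h (1 / x) = 2)
    (f : ℝ → ℂ)
    (hf : ∀ t : ℝ, f t =
      ∫ x in Set.Icc (0:ℝ) 1, Complex.exp (Complex.I * ((x * t : ℝ) : ℂ)) ∂h.measure) :
    Tendsto f atTop (𝓝 0) ↔
      (Tendsto (fun t : ℝ =>
          t * ∫ x in Set.Ioi (0:ℝ), h (1 / x) * Real.sin (x * t)) atTop (𝓝 2) ∧
       Tendsto (fun t : ℝ =>
          t * ∫ x in Set.Ioi (0:ℝ), h (1 / x) * Real.cos (x * t)) atTop (𝓝 0)) := by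
  have hg := integrableOn_minkowski_inv h h0 heq1 heq2
  have hmul := fun t => (minkowski_fourier_eq_mul h hcont h0 h1 heq1 heq2 t).trans (hf t).symm
  have hnorm : ∀ t : ℝ, ‖1 - Complex.exp (Complex.I * t) / 2‖ ∈ Icc (1 / 2 : ℝ) (3 / 2) :=
    fun t => norm_one_sub_div_two_mem_Icc (by rw [mul_comm, Complex.norm_exp_ofReal_mul_I])
  rw [← tendsto_zero_iff_of_mul_eq (by norm_num : (0 : ℝ) < 1 / 2) hnorm hmul,
    Complex.tendsto_nhds_iff_re_im]
  have hreim : ∀ t C S : ℝ, (2 : ℂ) + Complex.I * t * (C + S * Complex.I) =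
      ((2 - t * S : ℝ) : ℂ) + ((t * C : ℝ) : ℂ) * Complex.I := fun t C S => by
    push_cast
    linear_combination (t * S : ℂ) * Complex.I_sq
  simp only [integral_ofReal_mul_cexp_I_mul hg, hreim, Complex.add_re, Complex.add_im,
    Complex.ofReal_re, Complex.ofReal_im, Complex.re_ofReal_mul, Complex.im_ofReal_mul,
    Complex.I_re, Complex.I_im, Complex.zero_re, Complex.zero_im, mul_zero, mul_one, add_zero,
    zero_add]
  rw [← sub_self (2 : ℝ), tendsto_const_sub_iff]

/-- Salem's problem, equivalent form: for the (extended) Minkowski question mark function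
`h`, the Fourier–Stieltjes transform `f t = ∫₀¹ e^{ixt} dh(x)` tends to `0` as `t → +∞`
iff `lim_{t→∞} t ∫₀^∞ h(1/x) sin(xt) dx = 2` and `lim_{t→∞} t ∫₀^∞ h(1/x) cos(xt) dx = 0`. -/
theorem stmt17 (h : StieltjesFunction ℝ) (hcont : Continuous (h : ℝ → ℝ))
    (hmono : StrictMonoOn (h : ℝ → ℝ) (Set.Icc 0 1))
    (h0 : h 0 = 0) (h1 : h 1 = 1)
    (hsym : ∀ x ∈ Set.Icc (0:ℝ) 1, h x = 1 - h (1 - x))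
    (heq1 : ∀ x ≥ (0:ℝ), h x = 2 * h (x / (x + 1)))
    (heq2 : ∀ x > (0:ℝ), h x + h (1 / x) = 2)
    (f : ℝ → ℂ)
    (hf : ∀ t : ℝ, f t =
      ∫ x in Set.Icc (0:ℝ) 1, Complex.exp (Complex.I * ((x * t : ℝ) : ℂ)) ∂h.measure) :
    Tendsto f atTop (𝓝 0) ↔
      (Tendsto (fun t : ℝ =>
          t * ∫ x in Set.Ioi (0:ℝ), h (1 / x) * Real.sin (x * t)) atTop (𝓝 2) ∧
       Tendsto (fun t : ℝ =>
          t * ∫ x in Set.Ioi (0:ℝ), h (1 / x) * Real.cos (x * t)) atTop (𝓝 0)) :=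
  stmt17_general h hcont h0 h1 heq1 heq2 f hf
end

section
/- Let μ be a finite Borel measure on [0,1] such that its Fourier–Stieltjes coefficients at integer frequencies vanish: ∫₀¹ e^{2πinx} dμ(x) → 0 as n → ∞ (through integers). Then for every k ∈ ℕ, the k-th derivative of the Fourier–Stieltjes transform vanishes at infinity: ∫₀¹ (ix)^k e^{itx} dμ(x) → 0 as |t| → ∞. -/
/-!
Push `μ` forward to the circle `ℝ/ℤ`. There Salem's lemma holds: if the Fourier–Stieltjes
coefficients of a finite measure `ν` vanish at infinity, then so do those of `G • ν` for every
`G ∈ L¹(ν)`, first for trigonometric polynomials `G`, then for continuous `G` (uniform density),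
then for integrable `G` (density of continuous functions in `L¹(ν)`). Testing against indicators
shows that `ν` has no atoms, so the identification `[0,1) ≃ ℝ/ℤ` transfers the lemma to `μ`.

Writing `t = 2π(n + β)` with `n = ⌊t/2π⌋`, `β ∈ [0,1]`, the integral in question is the `n`-th
coefficient of `g_β • μ` with `g_β(x) = (ix)^k e^{2πiβx}`. These integrals are Lipschitz in `β`
uniformly in `n`, so equicontinuity on the compact `[0,1]` makes the convergence uniform in `β`,
and `n → ∞` as `|t| → ∞`.
-/

open MeasureTheory Set Filter Topology ComplexConjugate
open scoped NNReal

theorem tendsto_nhds_zero_of_forall_approx {ι E : Type*} [SeminormedAddCommGroup E]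
    {l : Filter ι} {a : ι → E}
    (h : ∀ ε > 0, ∃ b : ι → E, Tendsto b l (𝓝 0) ∧ ∀ i, ‖a i - b i‖ ≤ ε) :
    Tendsto a l (𝓝 0) := by
  refine Metric.tendsto_nhds.2 fun ε hε => ?_
  obtain ⟨b, hb, hab⟩ := h (ε / 2) (half_pos hε)
  filter_upwards [Metric.tendsto_nhds.1 hb (ε / 2) (half_pos hε)] with i hi
  rw [dist_zero_right] at hi ⊢
  calc ‖a i‖ ≤ ‖a i - b i‖ + ‖b i‖ := norm_le_norm_sub_add _ _
    _ < ε / 2 + ε / 2 := add_lt_add_of_le_of_lt (hab i) hi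
    _ = ε := add_halves ε

theorem tendsto_cofinite_of_neg_eq_conj {f : ℤ → ℂ} (hf : ∀ n, f (-n) = conj (f n))
    (h : Tendsto (fun n : ℕ => f n) atTop (𝓝 0)) : Tendsto f cofinite (𝓝 0) := by
  have htop : Tendsto f atTop (𝓝 0) := by
    rwa [← Nat.map_cast_int_atTop, tendsto_map'_iff]
  have hbot : Tendsto f atBot (𝓝 0) := by
    rw [← map_neg_atTop, tendsto_map'_iff]
    simpa [Function.comp_def, hf] using (Complex.continuous_conj.tendsto 0).comp htop
  rw [Int.cofinite_eq, tendsto_sup]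
  exact ⟨hbot, htop⟩

namespace AddCircle

variable {T : ℝ} {ν : Measure (AddCircle T)}

theorem norm_fourier_apply (n : ℤ) (y : AddCircle T) : ‖fourier n y‖ = 1 :=
  Circle.norm_coe _

theorem integrable_mul_fourier {G : AddCircle T → ℂ} (hG : Integrable G ν) (n : ℤ) :
    Integrable (fun y => G y * fourier n y) ν :=
  hG.mul_bdd (map_continuous _).aestronglyMeasurable (c := 1)
    (ae_of_all _ fun y => (norm_fourier_apply n y).le)

variable [Fact (0 < T)] [IsFiniteMeasure ν]

theorem integrable_continuousMap (G : C(AddCircle T, ℂ)) : Integrable G ν :=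
  G.continuous.integrable_of_hasCompactSupport (.of_compactSpace _)

variable (hν : Tendsto (fun n : ℤ => ∫ y, fourier n y ∂ν) cofinite (𝓝 0))
include hν

theorem tendsto_integral_mul_fourier_of_mem_span {P : C(AddCircle T, ℂ)}
    (hP : P ∈ Submodule.span ℂ (range fourier)) :
    Tendsto (fun n => ∫ y, P y * fourier n y ∂ν) cofinite (𝓝 0) := by
  induction hP using Submodule.span_induction with
  | mem P hP =>
    obtain ⟨m, rfl⟩ := hP
    refine (hν.comp (add_right_injective m).tendsto_cofinite).congr fun n => ?_
    simp only [Function.comp_apply, fourier_add]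
  | zero => simp
  | add P Q _ _ hP hQ =>
    simpa only [ContinuousMap.add_apply, add_mul,
      integral_add (integrable_mul_fourier (integrable_continuousMap P) _)
        (integrable_mul_fourier (integrable_continuousMap Q) _), add_zero] using hP.add hQ
  | smul c P _ hP =>
    simpa only [ContinuousMap.smul_apply, smul_eq_mul, mul_assoc, integral_const_mul,
      mul_zero] using hP.const_mul c

theorem tendsto_integral_mul_fourier_of_continuous (G : C(AddCircle T, ℂ)) :
    Tendsto (fun n => ∫ y, G y * fourier n y ∂ν) cofinite (𝓝 0) := by
  refine tendsto_nhds_zero_of_forall_approx fun ε hε => ?_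
  have hM : 0 < ν.real univ + 1 := by positivity
  have hG : G ∈ closure (Submodule.span ℂ (range (fourier (T := T))) :
      Set C(AddCircle T, ℂ)) := by
    rw [← Submodule.topologicalClosure_coe, span_fourier_closure_eq_top]
    trivial
  obtain ⟨P, hP, hGP⟩ := Metric.mem_closure_iff.1 hG (ε / (ν.real univ + 1)) (by positivity)
  refine ⟨_, tendsto_integral_mul_fourier_of_mem_span hν hP, fun n => ?_⟩
  rw [← integral_sub (integrable_mul_fourier (integrable_continuousMap G) n)
    (integrable_mul_fourier (integrable_continuousMap P) n)]
  calc ‖∫ y, G y * fourier n y - P y * fourier n y ∂ν‖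
      ≤ ε / (ν.real univ + 1) * ν.real univ := by
        refine norm_integral_le_of_norm_le_const (ae_of_all _ fun y => ?_)
        rw [← sub_mul, norm_mul, norm_fourier_apply, mul_one, ← dist_eq_norm]
        exact ((G.dist_apply_le_dist y).trans_lt hGP).le
    _ ≤ ε := by
        rw [div_mul_eq_mul_div, div_le_iff₀ hM]
        nlinarith [measureReal_nonneg (μ := ν) (s := univ)]

theorem tendsto_integral_mul_fourier {G : AddCircle T → ℂ} (hG : Integrable G ν) :
    Tendsto (fun n => ∫ y, G y * fourier n y ∂ν) cofinite (𝓝 0) := by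
  refine tendsto_nhds_zero_of_forall_approx fun ε hε => ?_
  obtain ⟨H, hGH, hH⟩ := hG.exists_boundedContinuous_integral_sub_le hε
  refine ⟨fun n => ∫ y, H y * fourier n y ∂ν,
    tendsto_integral_mul_fourier_of_continuous hν H.toContinuousMap, fun n => ?_⟩
  rw [← integral_sub (integrable_mul_fourier hG n) (integrable_mul_fourier hH n)]
  refine (norm_integral_le_of_norm_le (hG.sub hH).norm (ae_of_all _ fun y => ?_)).trans hGH
  rw [← sub_mul, norm_mul, norm_fourier_apply, mul_one]
  exact le_rfl

theorem nullSingletonClass_of_tendsto_fourier : NullSingletonClass ν := by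
  refine ⟨fun y => ?_⟩
  have h := (tendsto_integral_mul_fourier hν ((integrable_const (1 : ℂ)).indicator
    (measurableSet_singleton y))).norm
  simp only [← indicator_mul_left, integral_indicator (measurableSet_singleton y),
    integral_singleton, norm_smul, norm_fourier_apply, one_mul, mul_one, Real.norm_eq_abs,
    abs_of_nonneg measureReal_nonneg, norm_zero, tendsto_const_nhds_iff] at h
  exact (measureReal_eq_zero_iff).1 h

end AddCircle

section UnitInterval

variable {μ : Measure ℝ} [IsFiniteMeasure μ] (hsupp : ∀ᵐ x ∂μ, x ∈ Icc (0 : ℝ) 1)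
  (hμ : Tendsto (fun n : ℤ => ∫ x, fourier n (x : AddCircle (1 : ℝ)) ∂μ) cofinite (𝓝 0))
include hsupp hμ

theorem tendsto_integral_mul_fourier_coe {g : ℝ → ℂ} (hgm : Measurable g)
    (hgi : Integrable g μ) :
    Tendsto (fun n => ∫ x, g x * fourier n (x : AddCircle (1 : ℝ)) ∂μ) cofinite (𝓝 0) := by
  set ν := μ.map ((↑) : ℝ → AddCircle (1 : ℝ))
  have hmk : Measurable ((↑) : ℝ → AddCircle (1 : ℝ)) := AddCircle.measurable_mk'
  have hν : Tendsto (fun n : ℤ => ∫ y, fourier n y ∂ν) cofinite (𝓝 0) := by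
    simpa only [ν, integral_map hmk.aemeasurable (map_continuous _).aestronglyMeasurable] using hμ
  have hν0 := (AddCircle.nullSingletonClass_of_tendsto_fourier hν).measure_singleton 0
  have h1 : μ {1} = 0 := by
    refine measure_mono_null (fun x hx => ?_)
      ((Measure.map_apply hmk (measurableSet_singleton 0)).symm.trans hν0)
    simp_all [AddCircle.coe_period]
  -- `equivIco` sends `↑1 = ↑0` to `0`, so the lift `G` of `g` agrees with `g` only off `{1}`.
  set G : AddCircle (1 : ℝ) → ℂ := fun y => g (AddCircle.equivIco 1 0 y)
  have hGm : Measurable G :=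
    hgm.comp (measurable_subtype_coe.comp (AddCircle.measurableEquivIco 1 0).measurable)
  have hG : (fun x : ℝ => G x) =ᵐ[μ] g := by
    filter_upwards [hsupp, measure_eq_zero_iff_ae_notMem.1 h1] with x hx hx1
    simp only [G]
    rw [AddCircle.equivIco_coe_of_mem ⟨hx.1, by simpa using lt_of_le_of_ne hx.2 hx1⟩]
  have hGi : Integrable G ν :=
    (integrable_map_measure hGm.aestronglyMeasurable hmk.aemeasurable).2 (hgi.congr hG.symm)
  refine (AddCircle.tendsto_integral_mul_fourier hν hGi).congr fun n => ?_
  rw [integral_map (f := fun y => G y * fourier n y) hmk.aemeasurable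
    (hGm.mul (map_continuous _).measurable).aestronglyMeasurable]
  exact integral_congr_ae (hG.mono fun x hx => by simp only [hx])

theorem tendstoUniformly_integral_mul_fourier_coe {X : Type*} [PseudoMetricSpace X]
    [CompactSpace X] {g : X → ℝ → ℂ} (hgm : ∀ β, Measurable (g β))
    (hgi : ∀ β, Integrable (g β) μ) {L : ℝ≥0} (hL : ∀ᵐ x ∂μ, LipschitzWith L (g · x)) :
    TendstoUniformly (fun n β => ∫ x, g β x * fourier n (x : AddCircle (1 : ℝ)) ∂μ) 0
      cofinite := by
  have hint (β : X) (n : ℤ) :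
      Integrable (fun x => g β x * fourier n (x : AddCircle (1 : ℝ))) μ :=
    (hgi β).mul_bdd (by fun_prop) (ae_of_all _ fun x => (AddCircle.norm_fourier_apply n x).le)
  have hlip (n : ℤ) : LipschitzWith (L * (μ univ).toNNReal)
      (fun β => ∫ x, g β x * fourier n (x : AddCircle (1 : ℝ)) ∂μ) := by
    refine LipschitzWith.of_dist_le_mul fun β β' => ?_
    rw [dist_eq_norm, ← integral_sub (hint β n) (hint β' n)]
    calc ‖∫ x, g β x * fourier n (x : AddCircle (1 : ℝ)) -
          g β' x * fourier n (x : AddCircle (1 : ℝ)) ∂μ‖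
        ≤ L * dist β β' * μ.real univ := by
          refine norm_integral_le_of_norm_le_const (hL.mono fun x hx => ?_)
          rw [← sub_mul, norm_mul, AddCircle.norm_fourier_apply, mul_one, ← dist_eq_norm]
          exact hx.dist_le_mul β β'
      _ = ↑(L * (μ univ).toNNReal) * dist β β' := by
          rw [NNReal.coe_mul, ENNReal.coe_toNNReal_eq_toReal, measureReal_def]
          ring
  refine UniformFun.tendsto_iff_tendstoUniformly.1
    (((LipschitzWith.uniformEquicontinuous _ _ hlip).equicontinuous.tendsto_uniformFun_iff_pi
      _ 0).2 (tendsto_pi_nhds.2 fun β => ?_))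
  exact tendsto_integral_mul_fourier_coe hsupp hμ (hgm β) (hgi β)

end UnitInterval

open Complex Real

theorem norm_exp_I_mul_ofReal_sub_exp_I_mul_ofReal_le (a b : ℝ) :
    ‖exp (I * a) - exp (I * b)‖ ≤ |a - b| := by
  have h : exp (I * a) - exp (I * b) = exp (I * b) * (exp (I * ↑(a - b)) - 1) := by
    rw [mul_sub, ← Complex.exp_add]
    push_cast
    ring_nf
  rw [h, norm_mul, norm_exp_I_mul_ofReal, one_mul, ← Real.norm_eq_abs]
  exact Real.norm_exp_I_mul_ofReal_sub_one_le

theorem norm_I_mul_ofReal_pow_le_one (k : ℕ) {x : ℝ} (hx : x ∈ Icc (0 : ℝ) 1) :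
    ‖(I * x) ^ k‖ ≤ 1 := by
  rw [norm_pow, norm_mul, norm_I, one_mul, norm_real, Real.norm_eq_abs]
  exact pow_le_one₀ (abs_nonneg x) (abs_le.2 ⟨by linarith [hx.1], hx.2⟩)

theorem lipschitzWith_pow_mul_exp_two_pi_I (k : ℕ) {x : ℝ} (hx : x ∈ Icc (0 : ℝ) 1) :
    LipschitzWith (2 * NNReal.pi)
      (fun β : unitInterval => (I * x) ^ k * exp (I * ↑(2 * π * β * x))) := by
  refine LipschitzWith.of_dist_le_mul fun β β' => ?_
  have hx' : |x| ≤ 1 := abs_le.2 ⟨by linarith [hx.1], hx.2⟩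
  rw [dist_eq_norm, ← mul_sub, norm_mul, NNReal.coe_mul, NNReal.coe_ofNat, NNReal.coe_real_pi,
    Subtype.dist_eq, Real.dist_eq]
  calc ‖(I * x) ^ k‖ * ‖exp (I * ↑(2 * π * β * x)) - exp (I * ↑(2 * π * β' * x))‖
      ≤ 1 * |2 * π * β * x - 2 * π * β' * x| :=
        mul_le_mul (norm_I_mul_ofReal_pow_le_one k hx)
          (norm_exp_I_mul_ofReal_sub_exp_I_mul_ofReal_le _ _) (norm_nonneg _) zero_le_one
    _ = 2 * π * |(β : ℝ) - β'| * |x| := by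
        rw [one_mul, ← sub_mul, ← mul_sub, abs_mul, abs_mul, abs_of_pos two_pi_pos]
    _ ≤ 2 * π * |(β : ℝ) - β'| := mul_le_of_le_one_right (by positivity) hx'

theorem exp_I_mul_two_pi_mul_eq_mul_fourier (s x : ℝ) :
    exp (I * ↑(2 * π * s * x)) =
      exp (I * ↑(2 * π * Int.fract s * x)) * fourier ⌊s⌋ (x : AddCircle (1 : ℝ)) := by
  rw [fourier_coe_apply, ← Complex.exp_add]
  congr 1
  conv_lhs => rw [← Int.floor_add_fract s]
  push_cast
  ring

theorem tendsto_floor_div_cocompact {c : ℝ} (hc : 0 < c) :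
    Tendsto (fun t : ℝ => ⌊t / c⌋) (cocompact ℝ) cofinite := by
  rw [cocompact_eq_atBot_atTop, Int.cofinite_eq]
  exact (tendsto_floor_atBot.comp (tendsto_id.atBot_div_const hc)).sup_sup
    (tendsto_floor_atTop.comp (tendsto_id.atTop_div_const hc))

/-- Theorem 3: if the Fourier–Stieltjes coefficients of a finite Borel measure `μ` on
`[0,1]` vanish at infinity, then for every `k`, `∫₀¹ (ix)^k e^{itx} dμ(x) → 0` as
`|t| → ∞`. -/
theorem stmt18 (μ : Measure ℝ) [IsFiniteMeasure μ]
    (hsupp : μ (Set.Icc (0:ℝ) 1)ᶜ = 0)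
    (hcoef : Tendsto (fun n : ℕ =>
      ∫ x in Set.Icc (0:ℝ) 1,
        Complex.exp (2 * Real.pi * Complex.I * (n : ℂ) * (x : ℂ)) ∂μ) atTop (𝓝 0)) :
    ∀ k : ℕ, Tendsto (fun t : ℝ =>
      ∫ x in Set.Icc (0:ℝ) 1,
        (Complex.I * (x : ℂ)) ^ k * Complex.exp (Complex.I * ((t * x : ℝ) : ℂ)) ∂μ)
      (cocompact ℝ) (𝓝 0) := by
  intro k
  have hsupp' : ∀ᵐ x ∂μ, x ∈ Icc (0 : ℝ) 1 := mem_ae_iff.2 hsupp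
  rw [Measure.restrict_eq_self_of_ae_mem hsupp'] at hcoef ⊢
  have hμ : Tendsto (fun n : ℤ => ∫ x, fourier n (x : AddCircle (1 : ℝ)) ∂μ) cofinite (𝓝 0) :=
    tendsto_cofinite_of_neg_eq_conj (fun n => by simp only [fourier_neg, integral_conj])
      (hcoef.congr fun n => by
        simp only [fourier_coe_apply, Int.cast_natCast, ofReal_one, div_one])
  have hunif := tendstoUniformly_integral_mul_fourier_coe hsupp' hμ
    (g := fun (β : unitInterval) (x : ℝ) => (I * x) ^ k * exp (I * ↑(2 * π * β * x)))
    (fun β => by fun_prop) (fun β => .of_bound (by fun_prop) 1 (hsupp'.mono fun x hx => by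
      rw [norm_mul, norm_exp_I_mul_ofReal, mul_one]
      exact norm_I_mul_ofReal_pow_le_one k hx))
    (hsupp'.mono fun x hx => lipschitzWith_pow_mul_exp_two_pi_I k hx)
  have hsplit : Tendsto (fun t : ℝ => (⌊t / (2 * π)⌋, (⟨Int.fract (t / (2 * π)),
      Int.fract_nonneg _, (Int.fract_lt_one _).le⟩ : unitInterval))) (cocompact ℝ)
      (cofinite ×ˢ ⊤) :=
    (tendsto_floor_div_cocompact two_pi_pos).prodMk tendsto_top
  refine ((Uniform.tendsto_nhds_right.2 (tendstoUniformlyOnFilter_iff_tendsto.1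
    hunif.tendstoUniformlyOnFilter)).comp hsplit).congr fun t => ?_
  simp only [Function.comp_apply]
  congr 1
  ext x
  rw [mul_assoc, ← exp_I_mul_two_pi_mul_eq_mul_fourier, mul_div_cancel₀ _ two_pi_pos.ne']
end
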